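/- arXiv:2406.17188 — 5 statements merged into one kernel-verified Lean document; each statement's English description precedes it below -/
import Mathlib

section
/- Let H be a real inner product space, let G and B be disjoint finite families of points of H with union D = G ∪ B and |B| < |G|, let ε ≥ 0, and let μ ∈ H be an ε-approximate geometric median of D, i.e. Σ_{x ∈ D} ‖μ − x‖ ≤ inf_{z ∈ H} Σ_{x ∈ D} ‖z − x‖ + ε. Then (|G| − |B|)·‖μ‖ ≤ 2·Σ_{x ∈ G} ‖x‖ + ε. -/
/-!
Comparing the near-minimal value at `μ` with the value at `0` gives
`∑_{G ∪ B} (‖μ - x‖ - ‖x‖) ≤ ε`. By the reverse triangle inequality the summand is at least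
`‖μ‖ - 2‖x‖` for a good point and at least `-‖μ‖` for a bad one; summing gives the claim.
-/

open Finset

theorem le_add_of_le_ciInf_add {α : Type*} {g : α → ℝ} (hg : BddBelow (Set.range g)) {a : α}
    {ε : ℝ} (h : g a ≤ (⨅ z, g z) + ε) (z : α) : g a ≤ g z + ε :=
  h.trans (add_le_add_left (ciInf_le hg z) ε)

section

variable {E ι : Type*} [SeminormedAddCommGroup E]

theorem bddBelow_range_sum_norm_sub (s : Finset ι) (f : ι → E) :
    BddBelow (Set.range fun z : E => ∑ i ∈ s, ‖z - f i‖) :=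
  ⟨0, by rintro _ ⟨z, rfl⟩; positivity⟩

theorem sum_norm_sub_le_sum_norm_add_of_le_iInf_add {s : Finset ι} {f : ι → E} {μ : E} {ε : ℝ}
    (hμ : ∑ i ∈ s, ‖μ - f i‖ ≤ (⨅ z : E, ∑ i ∈ s, ‖z - f i‖) + ε) :
    ∑ i ∈ s, ‖μ - f i‖ ≤ ∑ i ∈ s, ‖f i‖ + ε := by
  simpa using le_add_of_le_ciInf_add (bddBelow_range_sum_norm_sub s f) hμ 0

theorem card_sub_card_mul_norm_le [DecidableEq ι] {G B : Finset ι} (hGB : Disjoint G B)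
    (f : ι → E) (μ : E) :
    ((G.card : ℝ) - B.card) * ‖μ‖ ≤
      2 * ∑ i ∈ G, ‖f i‖ + (∑ i ∈ G ∪ B, ‖μ - f i‖ - ∑ i ∈ G ∪ B, ‖f i‖) := by
  have hG : ∑ i ∈ G, (‖μ‖ - ‖f i‖) ≤ ∑ i ∈ G, ‖μ - f i‖ :=
    sum_le_sum fun i _ => norm_sub_norm_le μ (f i)
  have hB : ∑ i ∈ B, (‖f i‖ - ‖μ‖) ≤ ∑ i ∈ B, ‖μ - f i‖ :=
    sum_le_sum fun i _ => norm_sub_rev μ (f i) ▸ norm_sub_norm_le (f i) μ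
  simp only [sum_sub_distrib, sum_const, nsmul_eq_mul] at hG hB
  rw [sum_union hGB, sum_union hGB]
  linarith

end

theorem gm_norm_bound_general
    {H : Type*} [NormedAddCommGroup H]
    {ι : Type*} [DecidableEq ι] (G B : Finset ι) (hGB : Disjoint G B)
    (f : ι → H) (ε : ℝ) (μ : H)
    (hμ : ∑ i ∈ G ∪ B, ‖μ - f i‖ ≤ (⨅ z : H, ∑ i ∈ G ∪ B, ‖z - f i‖) + ε) :
    ((G.card : ℝ) - B.card) * ‖μ‖ ≤ 2 * ∑ i ∈ G, ‖f i‖ + ε := by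
  have hsplit := card_sub_card_mul_norm_le hGB f μ
  have hzero := sum_norm_sub_le_sum_norm_add_of_le_iInf_add hμ
  linarith

/-- an `ε`-approximate geometric median of an `α`-corrupted set
satisfies `(|G| - |B|) * ‖μ‖ ≤ 2 * Σ_{x ∈ G} ‖x‖ + ε`. -/
theorem gm_norm_bound
    {H : Type*} [NormedAddCommGroup H] [InnerProductSpace ℝ H]
    {ι : Type*} [DecidableEq ι] (G B : Finset ι) (hGB : Disjoint G B)
    (hcard : B.card < G.card)
    (f : ι → H) (ε : ℝ) (hε : 0 ≤ ε) (μ : H)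
    (hμ : ∑ i ∈ G ∪ B, ‖μ - f i‖ ≤ (⨅ z : H, ∑ i ∈ G ∪ B, ‖z - f i‖) + ε) :
    ((G.card : ℝ) - B.card) * ‖μ‖ ≤ 2 * ∑ i ∈ G, ‖f i‖ + ε :=
  gm_norm_bound_general G B hGB f ε μ hμ
end

section
/- Let H be a real inner product space, let G and B be disjoint finite families of points of H with union D = G ∪ B and |B| < |G|, let ε ≥ 0, and let μ ∈ H be an ε-approximate geometric median of D, i.e. Σ_{x ∈ D} ‖μ − x‖ ≤ inf_{z ∈ H} Σ_{x ∈ D} ‖z − x‖ + ε. Then ‖μ‖² ≤ (8·|G| / (|G| − |B|)²) · Σ_{x ∈ G} ‖x‖² + 2ε² / (|G| − |B|)². -/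
open Finset

/-- squared-norm bound on an `ε`-approximate geometric median of
an `α`-corrupted set. -/
theorem gm_sq_norm_bound
    {H : Type*} [NormedAddCommGroup H] [InnerProductSpace ℝ H]
    {ι : Type*} [DecidableEq ι] (G B : Finset ι) (hGB : Disjoint G B)
    (hcard : B.card < G.card)
    (f : ι → H) (ε : ℝ) (hε : 0 ≤ ε) (μ : H)
    (hμ : ∑ i ∈ G ∪ B, ‖μ - f i‖ ≤ (⨅ z : H, ∑ i ∈ G ∪ B, ‖z - f i‖) + ε) :
    ‖μ‖ ^ 2 ≤ (8 * (G.card : ℝ) / ((G.card : ℝ) - B.card) ^ 2) * ∑ i ∈ G, ‖f i‖ ^ 2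
      + 2 * ε ^ 2 / ((G.card : ℝ) - B.card) ^ 2 := by
  set c : ℝ := (G.card : ℝ) - B.card with hcdef
  have hc : 0 < c := by
    have : (B.card : ℝ) < G.card := by exact_mod_cast hcard
    simp [hcdef]; linarith
  -- the infimum is at most the value at 0
  have hinf : (⨅ z : H, ∑ i ∈ G ∪ B, ‖z - f i‖) ≤ ∑ i ∈ G ∪ B, ‖(0 : H) - f i‖ := by
    apply ciInf_le
    refine ⟨0, ?_⟩
    rintro y ⟨z, rfl⟩
    exact Finset.sum_nonneg fun i _ => norm_nonneg _
  have hmain : ∑ i ∈ G ∪ B, ‖μ - f i‖ ≤ ∑ i ∈ G ∪ B, ‖(0 : H) - f i‖ + ε :=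
    hμ.trans (by linarith)
  rw [Finset.sum_union hGB, Finset.sum_union hGB] at hmain
  simp only [zero_sub, norm_neg] at hmain
  -- lower bounds on the two parts
  have hG : ∑ i ∈ G, (‖μ‖ - ‖f i‖) ≤ ∑ i ∈ G, ‖μ - f i‖ :=
    Finset.sum_le_sum fun i _ => norm_sub_norm_le _ _
  have hB : ∑ i ∈ B, (‖f i‖ - ‖μ‖) ≤ ∑ i ∈ B, ‖μ - f i‖ :=
    Finset.sum_le_sum fun i _ => by
      rw [norm_sub_rev]; exact norm_sub_norm_le _ _
  have hGsum : ∑ i ∈ G, (‖μ‖ - ‖f i‖) = G.card * ‖μ‖ - ∑ i ∈ G, ‖f i‖ := by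
    rw [Finset.sum_sub_distrib, Finset.sum_const, nsmul_eq_mul]
  have hBsum : ∑ i ∈ B, (‖f i‖ - ‖μ‖) = ∑ i ∈ B, ‖f i‖ - B.card * ‖μ‖ := by
    rw [Finset.sum_sub_distrib, Finset.sum_const, nsmul_eq_mul]
  set S : ℝ := ∑ i ∈ G, ‖f i‖ with hS
  have hlin : c * ‖μ‖ ≤ 2 * S + ε := by
    rw [hGsum] at hG
    rw [hBsum] at hB
    have : (G.card : ℝ) * ‖μ‖ - S + (∑ i ∈ B, ‖f i‖ - B.card * ‖μ‖) ≤
        S + ∑ i ∈ B, ‖f i‖ + ε := by linarith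
    simp only [hcdef]; linarith
  -- Cauchy–Schwarz
  have hCS : S ^ 2 ≤ (G.card : ℝ) * ∑ i ∈ G, ‖f i‖ ^ 2 := by
    have := sq_sum_le_card_mul_sum_sq (s := G) (f := fun i => ‖f i‖)
    simpa [hS] using this
  have hSnn : 0 ≤ S := Finset.sum_nonneg fun i _ => norm_nonneg _
  have hQnn : 0 ≤ ∑ i ∈ G, ‖f i‖ ^ 2 := Finset.sum_nonneg fun i _ => sq_nonneg _
  have hμnn : 0 ≤ ‖μ‖ := norm_nonneg _
  -- square the linear bound
  have hsq : c ^ 2 * ‖μ‖ ^ 2 ≤ 8 * ((G.card : ℝ) * ∑ i ∈ G, ‖f i‖ ^ 2) + 2 * ε ^ 2 := by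
    nlinarith [sq_nonneg (2 * S - ε), mul_nonneg hc.le hμnn, sq_nonneg (c * ‖μ‖)]
  rw [div_mul_eq_mul_div, ← add_div, le_div_iff₀ (by positivity)]
  nlinarith [hsq]
end

section
/- Let H be a real inner product space, let G and B be disjoint finite families of points of H with union D = G ∪ B and |B| < |G|, let ε ≥ 0, and let μ ∈ H be an ε-approximate geometric median of D, i.e. Σ_{x ∈ D} ‖μ − x‖ ≤ inf_{z ∈ H} Σ_{x ∈ D} ‖z − x‖ + ε. Let μ_G = (1/|G|)·Σ_{x ∈ G} x be the mean of the uncorrupted points. Then ‖μ − μ_G‖² ≤ (8·|G| / (|G| − |B|)²) · Σ_{x ∈ G} ‖x − μ_G‖² + 2ε² / (|G| − |B|)². -/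
open Finset

/-- Lemma 1 of the paper, deterministic form: an `ε`-approximate
geometric median of an `α`-corrupted set stays close to the mean `μ_G` of the
uncorrupted points. -/
theorem gm_robustness_lemma
    {H : Type*} [NormedAddCommGroup H] [InnerProductSpace ℝ H]
    {ι : Type*} [DecidableEq ι] (G B : Finset ι) (hGB : Disjoint G B)
    (hcard : B.card < G.card)
    (f : ι → H) (ε : ℝ) (hε : 0 ≤ ε) (μ : H)
    (hμ : ∑ i ∈ G ∪ B, ‖μ - f i‖ ≤ (⨅ z : H, ∑ i ∈ G ∪ B, ‖z - f i‖) + ε)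
    (μG : H) (hμG : μG = ((G.card : ℝ))⁻¹ • ∑ i ∈ G, f i) :
    ‖μ - μG‖ ^ 2 ≤
      (8 * (G.card : ℝ) / ((G.card : ℝ) - B.card) ^ 2) * ∑ i ∈ G, ‖f i - μG‖ ^ 2
      + 2 * ε ^ 2 / ((G.card : ℝ) - B.card) ^ 2 := by
  have ht : (0:ℝ) < (G.card : ℝ) - B.card := by
    have : (B.card : ℝ) < G.card := by exact_mod_cast hcard
    linarith
  set d := ‖μ - μG‖ with hd
  set S := ∑ i ∈ G, ‖f i - μG‖ with hS
  have hdnn : 0 ≤ d := norm_nonneg _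
  have hSnn : 0 ≤ S := Finset.sum_nonneg fun i _ => norm_nonneg _
  have hbdd : BddBelow (Set.range fun z : H => ∑ i ∈ G ∪ B, ‖z - f i‖) := by
    refine ⟨0, ?_⟩
    rintro x ⟨z, rfl⟩
    exact Finset.sum_nonneg fun i _ => norm_nonneg _
  have hinf : (⨅ z : H, ∑ i ∈ G ∪ B, ‖z - f i‖) ≤ ∑ i ∈ G ∪ B, ‖μG - f i‖ :=
    ciInf_le hbdd μG
  have hcmp : ∑ i ∈ G, ‖μ - f i‖ + ∑ i ∈ B, ‖μ - f i‖ ≤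
      S + ∑ i ∈ B, ‖μG - f i‖ + ε := by
    have h1 : ∑ i ∈ G ∪ B, ‖μ - f i‖ ≤ ∑ i ∈ G ∪ B, ‖μG - f i‖ + ε :=
      hμ.trans (add_le_add hinf (le_refl ε))
    rw [Finset.sum_union hGB, Finset.sum_union hGB] at h1
    have hS' : ∑ i ∈ G, ‖μG - f i‖ = S := by
      simp [hS, norm_sub_rev]
    linarith
  have hG : (G.card : ℝ) * d - S ≤ ∑ i ∈ G, ‖μ - f i‖ := by
    have h : ∑ i ∈ G, (d - ‖f i - μG‖) ≤ ∑ i ∈ G, ‖μ - f i‖ := by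
      refine Finset.sum_le_sum fun i _ => ?_
      have h2 := norm_add_le (μ - f i) (f i - μG)
      rw [sub_add_sub_cancel] at h2
      linarith
    rw [Finset.sum_sub_distrib, Finset.sum_const, nsmul_eq_mul] at h
    linarith
  have hB : (∑ i ∈ B, ‖μG - f i‖) - (B.card : ℝ) * d ≤ ∑ i ∈ B, ‖μ - f i‖ := by
    have h : ∑ i ∈ B, (‖μG - f i‖ - d) ≤ ∑ i ∈ B, ‖μ - f i‖ := by
      refine Finset.sum_le_sum fun i _ => ?_
      have h2 := norm_add_le (μG - μ) (μ - f i)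
      rw [sub_add_sub_cancel] at h2
      have h3 : ‖μG - μ‖ = d := by rw [hd, norm_sub_rev]
      linarith
    rw [Finset.sum_sub_distrib, Finset.sum_const, nsmul_eq_mul] at h
    linarith
  have hkey : ((G.card : ℝ) - B.card) * d ≤ 2 * S + ε := by
    nlinarith [hcmp, hG, hB]
  have hQ : S ^ 2 ≤ (G.card : ℝ) * ∑ i ∈ G, ‖f i - μG‖ ^ 2 :=
    sq_sum_le_card_mul_sum_sq
  set Q := ∑ i ∈ G, ‖f i - μG‖ ^ 2 with hQdef
  have hQnn : 0 ≤ Q := Finset.sum_nonneg fun i _ => sq_nonneg _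
  have heq : (8 * (G.card : ℝ) / ((G.card : ℝ) - B.card) ^ 2) * Q
      + 2 * ε ^ 2 / ((G.card : ℝ) - B.card) ^ 2
      = (8 * (G.card : ℝ) * Q + 2 * ε ^ 2) / ((G.card : ℝ) - B.card) ^ 2 := by
    field_simp
  rw [heq, le_div_iff₀ (by positivity)]
  nlinarith [sq_nonneg (2 * S - ε), mul_le_mul hkey hkey (by positivity) (le_trans (by positivity) hkey)]
end

section
/- Let H be a real inner product space, let G and B be disjoint finite families of points of H with union D = G ∪ B and |B| < |G|, let ε ≥ 0, and let μ ∈ H be an ε-approximate geometric median of D, i.e. Σ_{x ∈ D} ‖μ − x‖ ≤ inf_{z ∈ H} Σ_{x ∈ D} ‖z − x‖ + ε. Let μ_G = (1/|G|)·Σ_{x ∈ G} x. If every uncorrupted point satisfies ‖x − μ_G‖ ≤ σ for x ∈ G, then ‖μ − μ_G‖ ≤ (2·|G|·σ + ε) / (|G| − |B|). -/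
open Finset

/-- breakdown-point property: if all uncorrupted points lie
within distance `σ` of their mean `μ_G`, then an `ε`-approximate geometric
median `μ` of the corrupted set satisfies
`‖μ - μ_G‖ ≤ (2 |G| σ + ε) / (|G| - |B|)`. -/
theorem gm_breakdown_bound
    {H : Type*} [NormedAddCommGroup H] [InnerProductSpace ℝ H]
    {ι : Type*} [DecidableEq ι] (G B : Finset ι) (hGB : Disjoint G B)
    (hcard : B.card < G.card)
    (f : ι → H) (ε : ℝ) (hε : 0 ≤ ε) (μ : H)
    (hμ : ∑ i ∈ G ∪ B, ‖μ - f i‖ ≤ (⨅ z : H, ∑ i ∈ G ∪ B, ‖z - f i‖) + ε)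
    (μG : H) (hμG : μG = ((G.card : ℝ))⁻¹ • ∑ i ∈ G, f i)
    (σ : ℝ) (hσ : ∀ i ∈ G, ‖f i - μG‖ ≤ σ) :
    ‖μ - μG‖ ≤ (2 * (G.card : ℝ) * σ + ε) / ((G.card : ℝ) - B.card) := by
  have hcard' : (B.card : ℝ) < G.card := by exact_mod_cast hcard
  set r := ‖μ - μG‖ with hr
  have hbdd : BddBelow (Set.range fun z : H => ∑ i ∈ G ∪ B, ‖z - f i‖) := by
    refine ⟨0, ?_⟩
    rintro x ⟨z, rfl⟩
    positivity
  have h1 : ∑ i ∈ G ∪ B, ‖μ - f i‖ ≤ ∑ i ∈ G ∪ B, ‖μG - f i‖ + ε :=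
    le_trans hμ (add_le_add_left (ciInf_le hbdd μG) ε)
  rw [Finset.sum_union hGB, Finset.sum_union hGB] at h1
  have hGlow : (G.card : ℝ) * (r - σ) ≤ ∑ i ∈ G, ‖μ - f i‖ := by
    have := Finset.card_nsmul_le_sum G (fun i => ‖μ - f i‖) (r - σ) ?_
    · simpa [nsmul_eq_mul] using this
    · intro i hi
      have h := norm_add_le (μ - f i) (f i - μG)
      simp only [sub_add_sub_cancel] at h
      have := hσ i hi
      simp only [hr]
      linarith
  have hBlow : ∑ i ∈ B, (‖μG - f i‖ - r) ≤ ∑ i ∈ B, ‖μ - f i‖ := by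
    apply Finset.sum_le_sum
    intro i hi
    have h := norm_add_le (μG - μ) (μ - f i)
    simp only [sub_add_sub_cancel] at h
    have hre : ‖μG - μ‖ = r := by rw [hr, norm_sub_rev]
    linarith
  have hBlow' : ∑ i ∈ B, ‖μG - f i‖ - (B.card : ℝ) * r ≤ ∑ i ∈ B, ‖μ - f i‖ := by
    have : ∑ i ∈ B, (‖μG - f i‖ - r) = ∑ i ∈ B, ‖μG - f i‖ - (B.card : ℝ) * r := by
      rw [Finset.sum_sub_distrib]
      simp [nsmul_eq_mul]
    linarith [hBlow]
  have hGup : ∑ i ∈ G, ‖μG - f i‖ ≤ (G.card : ℝ) * σ := by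
    calc ∑ i ∈ G, ‖μG - f i‖ ≤ ∑ i ∈ G, σ := by
          apply Finset.sum_le_sum
          intro i hi
          rw [norm_sub_rev]
          exact hσ i hi
      _ = (G.card : ℝ) * σ := by simp [nsmul_eq_mul]
  have hkey : ((G.card : ℝ) - B.card) * r ≤ 2 * (G.card : ℝ) * σ + ε := by nlinarith
  rw [le_div_iff₀ (by linarith)]
  linarith [hkey, mul_comm r ((G.card : ℝ) - B.card)]
end

section
/- Let H be a real inner product space, r > 0 and 0 < κ ≤ 1. Let θ_0 ∈ H with ‖θ_0‖ ≤ r/κ + 2r and let (m_t)_{t≥0} be a sequence in H with, for every t, ‖m_t‖ ≤ 2r and ⟨θ_t, m_t⟩ ≥ κ·‖θ_t‖·‖m_t‖, where θ_{t+1} = θ_t − m_t. Then ‖θ_t‖ ≤ r/κ + 2r for every t ≥ 0. -/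
open scoped RealInnerProductSpace

/-!
Once `‖θ_t‖ > r/κ`, the angle condition gives `2⟪θ_t, m_t⟫ ≥ 2κ‖θ_t‖‖m_t‖ ≥ 2r‖m_t‖ ≥ ‖m_t‖²`,
so the step `θ_t ↦ θ_t - m_t` does not increase the norm; while `‖θ_t‖ ≤ r/κ`, the triangle
inequality and `‖m_t‖ ≤ 2r` keep `‖θ_{t+1}‖ ≤ r/κ + 2r`. Induction on `t` concludes.
-/

section

variable {H : Type*} [NormedAddCommGroup H] [InnerProductSpace ℝ H]

theorem norm_sub_le_norm_of_sq_le_two_inner {θ m : H} (h : ‖m‖ ^ 2 ≤ 2 * ⟪θ, m⟫) :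
    ‖θ - m‖ ≤ ‖θ‖ := by
  have hsq : ‖θ - m‖ ^ 2 ≤ ‖θ‖ ^ 2 := by
    rw [norm_sub_sq_real]
    linarith
  exact (sq_le_sq₀ (norm_nonneg _) (norm_nonneg _)).mp hsq

theorem norm_sub_le_of_angle_of_norm_le {r κ : ℝ} (hκ : 0 < κ) {θ m : H}
    (hm : ‖m‖ ≤ 2 * r) (hangle : κ * ‖θ‖ * ‖m‖ ≤ ⟪θ, m⟫) (hθ : ‖θ‖ ≤ r / κ + 2 * r) :
    ‖θ - m‖ ≤ r / κ + 2 * r := by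
  rcases le_or_gt ‖θ‖ (r / κ) with hsmall | hlarge
  · calc ‖θ - m‖ ≤ ‖θ‖ + ‖m‖ := norm_sub_le _ _
      _ ≤ r / κ + 2 * r := add_le_add hsmall hm
  · have hr : r < κ * ‖θ‖ := (div_lt_iff₀' hκ).mp hlarge
    have hm' : ‖m‖ ≤ 2 * (κ * ‖θ‖) := hm.trans (by linarith)
    have hsq : ‖m‖ ^ 2 ≤ 2 * ⟪θ, m⟫ :=
      calc ‖m‖ ^ 2 = ‖m‖ * ‖m‖ := sq _
        _ ≤ ‖m‖ * (2 * (κ * ‖θ‖)) := mul_le_mul_of_nonneg_left hm' (norm_nonneg m)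
        _ = 2 * (κ * ‖θ‖ * ‖m‖) := by ring
        _ ≤ 2 * ⟪θ, m⟫ := by linarith
    exact (norm_sub_le_norm_of_sq_le_two_inner hsq).trans hθ

end

theorem herding_state_bounded_general
    {H : Type*} [NormedAddCommGroup H] [InnerProductSpace ℝ H]
    (r κ : ℝ) (hκ : 0 < κ)
    (θ m : ℕ → H)
    (hθ0 : ‖θ 0‖ ≤ r / κ + 2 * r)
    (hrec : ∀ t : ℕ, θ (t + 1) = θ t - m t)
    (hm : ∀ t : ℕ, ‖m t‖ ≤ 2 * r)
    (hangle : ∀ t : ℕ, κ * ‖θ t‖ * ‖m t‖ ≤ ⟪θ t, m t⟫) :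
    ∀ t : ℕ, ‖θ t‖ ≤ r / κ + 2 * r := by
  intro t
  induction t with
  | zero => exact hθ0
  | succ t ih =>
    rw [hrec]
    exact norm_sub_le_of_angle_of_norm_le hκ (hm t) (hangle t) ih

/-- uniform boundedness of the herding state: under the angle
condition and `‖m_t‖ ≤ 2r`, the iterates `θ_{t+1} = θ_t - m_t` remain in the
ball of radius `r/κ + 2r`. -/
theorem herding_state_bounded
    {H : Type*} [NormedAddCommGroup H] [InnerProductSpace ℝ H]
    (r κ : ℝ) (hr : 0 < r) (hκ : 0 < κ) (hκ1 : κ ≤ 1)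
    (θ m : ℕ → H)
    (hθ0 : ‖θ 0‖ ≤ r / κ + 2 * r)
    (hrec : ∀ t : ℕ, θ (t + 1) = θ t - m t)
    (hm : ∀ t : ℕ, ‖m t‖ ≤ 2 * r)
    (hangle : ∀ t : ℕ, κ * ‖θ t‖ * ‖m t‖ ≤ ⟪θ t, m t⟫) :
    ∀ t : ℕ, ‖θ t‖ ≤ r / κ + 2 * r :=
  herding_state_bounded_general r κ hκ θ m hθ0 hrec hm hangle
end
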